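/- Triangle inequality for Lasso-regularized fsFGW with q = 1: assume every entry of the probability vector b is strictly positive. Let fsFGW_L(X,Y), fsFGW_L(Y,Z), fsFGW_L(X,Z) denote the optimal values of the Lasso-regularized fsFGW problems between the corresponding pairs of structured objects, all with exponent q = 1 and the same α ∈ [0,1] and λ > 0. Then fsFGW_L(X,Z) ≤ fsFGW_L(X,Y) + fsFGW_L(Y,Z). -/

import Mathlib

/-!
Compose arbitrary feasible pairs `(T₁, w₁)` for `(X, Y)` and `(T₂, w₂)` for `(Y, Z)`: the
glued plan `T₁ diag(b)⁻¹ T₂` with weights `min (w₁ + w₂) 1` is feasible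
for `(X, Z)`. For `q = 1` every feature score is a transport cost whose cost satisfies the
triangle inequality, and so is the GW term, as the cost of `T ⊗ T` (gluing commutes with `⊗`);
such costs are subadditive under gluing. The new weights dominate `w₁` and `w₂` and their penalty is
at most the sum of the two penalties.
-/

/-- A probability vector: nonnegative entries summing to 1. -/
def IsProb {n : ℕ} (a : Fin n → ℝ) : Prop := (∀ i, 0 ≤ a i) ∧ ∑ i, a i = 1

/-- Membership in the transport polytope U(a,b). -/
def InU {n m : ℕ} (a : Fin n → ℝ) (b : Fin m → ℝ) (T : Matrix (Fin n) (Fin m) ℝ) : Prop :=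
  (∀ i j, 0 ≤ T i j) ∧ (∀ i, ∑ j, T i j = a i) ∧ (∀ j, ∑ i, T i j = b j)

/-- Feature score `s_r(T) = Σ_{i,j} T_{ij} |X_{ir} − Y_{jr}|^q`. -/
noncomputable def score {n m d : ℕ} (q : ℝ) (X : Matrix (Fin n) (Fin d) ℝ)
    (Y : Matrix (Fin m) (Fin d) ℝ) (T : Matrix (Fin n) (Fin m) ℝ) (r : Fin d) : ℝ :=
  ∑ i, ∑ j, T i j * |X i r - Y j r| ^ q

/-- Gromov–Wasserstein term `GW(T) = Σ |C^X_{ii'} − C^Y_{jj'}|^q T_{ij} T_{i'j'}`. -/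
noncomputable def gwTerm {n m : ℕ} (q : ℝ) (CX : Matrix (Fin n) (Fin n) ℝ)
    (CY : Matrix (Fin m) (Fin m) ℝ) (T : Matrix (Fin n) (Fin m) ℝ) : ℝ :=
  ∑ i, ∑ i', ∑ j, ∑ j', |CX i i' - CY j j'| ^ q * T i j * T i' j'

/-- Lasso-regularized fsFGW objective. -/
noncomputable def FL {n m d : ℕ} (q α lam : ℝ)
    (CX : Matrix (Fin n) (Fin n) ℝ) (CY : Matrix (Fin m) (Fin m) ℝ)
    (X : Matrix (Fin n) (Fin d) ℝ) (Y : Matrix (Fin m) (Fin d) ℝ)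
    (T : Matrix (Fin n) (Fin m) ℝ) (w : Fin d → ℝ) : ℝ :=
  (1 - α) * ∑ r, (1 - w r) * score q X Y T r + α * gwTerm q CX CY T + lam * ∑ r, w r

/-- Optimal value of the Lasso-regularized fsFGW problem between two
structured objects. -/
noncomputable def fsLVal {n m d : ℕ} (q α lam : ℝ)
    (CX : Matrix (Fin n) (Fin n) ℝ) (CY : Matrix (Fin m) (Fin m) ℝ)
    (X : Matrix (Fin n) (Fin d) ℝ) (Y : Matrix (Fin m) (Fin d) ℝ)
    (a : Fin n → ℝ) (b : Fin m → ℝ) : ℝ :=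
  sInf {v : ℝ | ∃ T w, InU a b T ∧ (∀ r, w r ∈ Set.Icc (0:ℝ) 1) ∧
    v = FL q α lam CX CY X Y T w}

open Finset Matrix
open scoped Kronecker

section Kronecker

variable {ι ι' κ κ' : Type*} (A : Matrix ι κ ℝ) (B : Matrix ι' κ' ℝ)

lemma sum_kronecker_col [Fintype ι] [Fintype ι'] (j : κ × κ') :
    ∑ i, (A ⊗ₖ B) i j = (∑ i, A i j.1) * ∑ i', B i' j.2 := by
  simp only [Fintype.sum_prod_type, kroneckerMap_apply, sum_mul_sum]

lemma sum_kronecker_row [Fintype κ] [Fintype κ'] (i : ι × ι') :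
    ∑ j, (A ⊗ₖ B) i j = (∑ j, A i.1 j) * ∑ j', B i.2 j' := by
  simp only [Fintype.sum_prod_type, kroneckerMap_apply, sum_mul_sum]

end Kronecker

section Gluing

variable {ι κ μ : Type*}

def transportCost [Fintype ι] [Fintype κ] (T : Matrix ι κ ℝ) (C : ι → κ → ℝ) : ℝ :=
  ∑ i, ∑ j, T i j * C i j

lemma sum_glue_summand_right [Fintype μ] {b : κ → ℝ} {T₁ : Matrix ι κ ℝ} {T₂ : Matrix κ μ ℝ}
    {j : κ} (hb : b j ≠ 0) (hT₂ : ∑ k, T₂ j k = b j) (i : ι) :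
    ∑ k, T₁ i j * T₂ j k / b j = T₁ i j := by
  rw [← sum_div, ← mul_sum, hT₂, mul_div_cancel_right₀ _ hb]

lemma sum_glue_summand_left [Fintype ι] {b : κ → ℝ} {T₁ : Matrix ι κ ℝ} {T₂ : Matrix κ μ ℝ}
    {j : κ} (hb : b j ≠ 0) (hT₁ : ∑ i, T₁ i j = b j) (k : μ) :
    ∑ i, T₁ i j * T₂ j k / b j = T₂ j k := by
  rw [← sum_div, ← sum_mul, hT₁, mul_div_cancel_left₀ _ hb]

/-- The plan `T₁ diag(b)⁻¹ T₂`, composing two plans through their common marginal `b`. -/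
noncomputable def glue [Fintype κ] (b : κ → ℝ) (T₁ : Matrix ι κ ℝ) (T₂ : Matrix κ μ ℝ) :
    Matrix ι μ ℝ :=
  of fun i k => ∑ j, T₁ i j * T₂ j k / b j

variable [Fintype κ] {b : κ → ℝ} {T₁ : Matrix ι κ ℝ} {T₂ : Matrix κ μ ℝ}

lemma glue_nonneg (hb : ∀ j, 0 ≤ b j) (hT₁ : ∀ i j, 0 ≤ T₁ i j) (hT₂ : ∀ j k, 0 ≤ T₂ j k)
    (i : ι) (k : μ) : 0 ≤ glue b T₁ T₂ i k :=
  sum_nonneg fun j _ => div_nonneg (mul_nonneg (hT₁ i j) (hT₂ j k)) (hb j)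

lemma sum_glue_row [Fintype μ] (hb : ∀ j, b j ≠ 0) (hT₂ : ∀ j, ∑ k, T₂ j k = b j) (i : ι) :
    ∑ k, glue b T₁ T₂ i k = ∑ j, T₁ i j := by
  simp only [glue, of_apply]
  rw [sum_comm]
  exact sum_congr rfl fun j _ => sum_glue_summand_right (hb j) (hT₂ j) i

lemma sum_glue_col [Fintype ι] (hb : ∀ j, b j ≠ 0) (hT₁ : ∀ j, ∑ i, T₁ i j = b j) (k : μ) :
    ∑ i, glue b T₁ T₂ i k = ∑ j, T₂ j k := by
  simp only [glue, of_apply]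
  rw [sum_comm]
  exact sum_congr rfl fun j _ => sum_glue_summand_left (hb j) (hT₁ j) k

theorem transportCost_glue_le [Fintype ι] [Fintype μ] (hb : ∀ j, 0 < b j)
    (hT₁ : ∀ i j, 0 ≤ T₁ i j) (hT₂ : ∀ j k, 0 ≤ T₂ j k)
    (hcol : ∀ j, ∑ i, T₁ i j = b j) (hrow : ∀ j, ∑ k, T₂ j k = b j)
    {A : ι → κ → ℝ} {B : κ → μ → ℝ} {C : ι → μ → ℝ} (hC : ∀ i j k, C i k ≤ A i j + B j k) :
    transportCost (glue b T₁ T₂) C ≤ transportCost T₁ A + transportCost T₂ B := by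
  have hb' : ∀ j, b j ≠ 0 := fun j => (hb j).ne'
  calc transportCost (glue b T₁ T₂) C
      = ∑ i, ∑ k, ∑ j, T₁ i j * T₂ j k / b j * C i k := by
        simp only [transportCost, glue, of_apply, sum_mul]
    _ ≤ ∑ i, ∑ k, ∑ j, T₁ i j * T₂ j k / b j * (A i j + B j k) := by
        gcongr with i _ k _ j _
        · exact div_nonneg (mul_nonneg (hT₁ i j) (hT₂ j k)) (hb j).le
        · exact hC i j k
    _ = ∑ i, ∑ j, (∑ k, T₁ i j * T₂ j k / b j) * A i j
          + ∑ j, ∑ k, (∑ i, T₁ i j * T₂ j k / b j) * B j k := by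
        simp only [mul_add, sum_add_distrib, sum_mul]
        congr 1
        · exact sum_congr rfl fun i _ => sum_comm
        · rw [sum_comm]
          exact (sum_congr rfl fun _ _ => sum_comm).trans sum_comm
    _ = transportCost T₁ A + transportCost T₂ B := by
        simp only [sum_glue_summand_right (hb' _) (hrow _),
          sum_glue_summand_left (hb' _) (hcol _), transportCost]

lemma glue_kronecker (T₁ : Matrix ι κ ℝ) (T₂ : Matrix κ μ ℝ) :
    glue (fun j : κ × κ => b j.1 * b j.2) (T₁ ⊗ₖ T₁) (T₂ ⊗ₖ T₂) = glue b T₁ T₂ ⊗ₖ glue b T₁ T₂ := by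
  ext ⟨i, i'⟩ ⟨k, k'⟩
  simp only [glue, of_apply, kronecker_apply, sum_mul_sum, Fintype.sum_prod_type]
  exact sum_congr rfl fun j _ => sum_congr rfl fun j' _ => by ring

end Gluing

lemma score_one_eq_transportCost {n m d : ℕ} (X : Matrix (Fin n) (Fin d) ℝ)
    (Y : Matrix (Fin m) (Fin d) ℝ) (T : Matrix (Fin n) (Fin m) ℝ) (r : Fin d) :
    score 1 X Y T r = transportCost T fun i j => |X i r - Y j r| := by
  simp only [score, transportCost, Real.rpow_one]

lemma gwTerm_one_eq_transportCost {n m : ℕ} (CX : Matrix (Fin n) (Fin n) ℝ)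
    (CY : Matrix (Fin m) (Fin m) ℝ) (T : Matrix (Fin n) (Fin m) ℝ) :
    gwTerm 1 CX CY T = transportCost (T ⊗ₖ T) fun I J => |CX I.1 I.2 - CY J.1 J.2| := by
  simp only [gwTerm, transportCost, Real.rpow_one, Fintype.sum_prod_type, kronecker_apply]
  exact sum_congr rfl fun i _ => sum_congr rfl fun i' _ => sum_congr rfl fun j _ =>
    sum_congr rfl fun j' _ => by ring

section Couplings

variable {n m p : ℕ} {a : Fin n → ℝ} {b : Fin m → ℝ} {c : Fin p → ℝ}
  {T₁ : Matrix (Fin n) (Fin m) ℝ} {T₂ : Matrix (Fin m) (Fin p) ℝ}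

lemma InU.vecMulVec (ha : IsProb a) (hb : IsProb b) : InU a b (vecMulVec a b) := by
  refine ⟨fun i j => mul_nonneg (ha.1 i) (hb.1 j), fun i => ?_, fun j => ?_⟩
  · simp only [vecMulVec_apply, ← mul_sum, hb.2, mul_one]
  · simp only [vecMulVec_apply, ← sum_mul, ha.2, one_mul]

lemma InU.glue (hb : ∀ j, 0 < b j) (h₁ : InU a b T₁) (h₂ : InU b c T₂) :
    InU a c (glue b T₁ T₂) :=
  ⟨glue_nonneg (fun j => (hb j).le) h₁.1 h₂.1,
    fun i => (sum_glue_row (fun j => (hb j).ne') h₂.2.1 i).trans (h₁.2.1 i),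
    fun k => (sum_glue_col (fun j => (hb j).ne') h₁.2.2 k).trans (h₂.2.2 k)⟩

lemma score_glue_le {d : ℕ} (hb : ∀ j, 0 < b j) (h₁ : InU a b T₁) (h₂ : InU b c T₂)
    (X : Matrix (Fin n) (Fin d) ℝ) (Y : Matrix (Fin m) (Fin d) ℝ) (Z : Matrix (Fin p) (Fin d) ℝ)
    (r : Fin d) :
    score 1 X Z (glue b T₁ T₂) r ≤ score 1 X Y T₁ r + score 1 Y Z T₂ r := by
  simp only [score_one_eq_transportCost]
  exact transportCost_glue_le hb h₁.1 h₂.1 h₁.2.2 h₂.2.1 fun _ _ _ => abs_sub_le _ _ _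

lemma gwTerm_glue_le (hb : ∀ j, 0 < b j) (h₁ : InU a b T₁) (h₂ : InU b c T₂)
    (CX : Matrix (Fin n) (Fin n) ℝ) (CY : Matrix (Fin m) (Fin m) ℝ)
    (CZ : Matrix (Fin p) (Fin p) ℝ) :
    gwTerm 1 CX CZ (glue b T₁ T₂) ≤ gwTerm 1 CX CY T₁ + gwTerm 1 CY CZ T₂ := by
  simp only [gwTerm_one_eq_transportCost, ← glue_kronecker]
  refine transportCost_glue_le (b := fun j : Fin m × Fin m => b j.1 * b j.2) (T₁ := T₁ ⊗ₖ T₁)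
    (T₂ := T₂ ⊗ₖ T₂) (A := fun I J => |CX I.1 I.2 - CY J.1 J.2|)
    (B := fun J K => |CY J.1 J.2 - CZ K.1 K.2|) (fun j => mul_pos (hb j.1) (hb j.2))
    (fun I J => mul_nonneg (h₁.1 I.1 J.1) (h₁.1 I.2 J.2))
    (fun J K => mul_nonneg (h₂.1 J.1 K.1) (h₂.1 J.2 K.2))
    (fun J => ?_) (fun J => ?_) fun _ _ _ => abs_sub_le _ _ _
  · simp only [sum_kronecker_col, h₁.2.2]
  · simp only [sum_kronecker_row, h₂.2.1]

end Couplings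

lemma one_sub_min_mul_le {w₁ w₂ s s₁ s₂ : ℝ} (hw₁ : w₁ ∈ Set.Icc (0 : ℝ) 1)
    (hw₂ : w₂ ∈ Set.Icc (0 : ℝ) 1) (hs₁ : 0 ≤ s₁) (hs₂ : 0 ≤ s₂) (hs : s ≤ s₁ + s₂) :
    (1 - min (w₁ + w₂) 1) * s ≤ (1 - w₁) * s₁ + (1 - w₂) * s₂ := by
  rcases le_total (w₁ + w₂) 1 with h | h
  · rw [min_eq_left h]
    nlinarith [mul_nonneg hw₁.1 hs₂, mul_nonneg hw₂.1 hs₁,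
      mul_le_mul_of_nonneg_left hs (sub_nonneg.2 h)]
  · rw [min_eq_right h, sub_self, zero_mul]
    exact add_nonneg (mul_nonneg (sub_nonneg.2 hw₁.2) hs₁) (mul_nonneg (sub_nonneg.2 hw₂.2) hs₂)

lemma score_nonneg {n m d : ℕ} {T : Matrix (Fin n) (Fin m) ℝ} (hT : ∀ i j, 0 ≤ T i j) (q : ℝ)
    (X : Matrix (Fin n) (Fin d) ℝ) (Y : Matrix (Fin m) (Fin d) ℝ) (r : Fin d) :
    0 ≤ score q X Y T r :=
  sum_nonneg fun i _ => sum_nonneg fun j _ =>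
    mul_nonneg (hT i j) (Real.rpow_nonneg (abs_nonneg _) q)

lemma gwTerm_nonneg {n m : ℕ} {T : Matrix (Fin n) (Fin m) ℝ} (hT : ∀ i j, 0 ≤ T i j) (q : ℝ)
    (CX : Matrix (Fin n) (Fin n) ℝ) (CY : Matrix (Fin m) (Fin m) ℝ) :
    0 ≤ gwTerm q CX CY T :=
  sum_nonneg fun i _ => sum_nonneg fun i' _ => sum_nonneg fun j _ => sum_nonneg fun j' _ =>
    mul_nonneg (mul_nonneg (Real.rpow_nonneg (abs_nonneg _) q) (hT i j)) (hT i' j')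

lemma FL_nonneg {n m d : ℕ} {q α lam : ℝ} (hα : α ∈ Set.Icc (0 : ℝ) 1) (hlam : 0 ≤ lam)
    {T : Matrix (Fin n) (Fin m) ℝ} {w : Fin d → ℝ} (hT : ∀ i j, 0 ≤ T i j)
    (hw : ∀ r, w r ∈ Set.Icc (0 : ℝ) 1) (CX : Matrix (Fin n) (Fin n) ℝ)
    (CY : Matrix (Fin m) (Fin m) ℝ) (X : Matrix (Fin n) (Fin d) ℝ) (Y : Matrix (Fin m) (Fin d) ℝ) :
    0 ≤ FL q α lam CX CY X Y T w := by
  have hscore : 0 ≤ ∑ r, (1 - w r) * score q X Y T r :=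
    sum_nonneg fun r _ => mul_nonneg (sub_nonneg.2 (hw r).2) (score_nonneg hT q X Y r)
  have hw' : 0 ≤ ∑ r, w r := sum_nonneg fun r _ => (hw r).1
  have hgw := gwTerm_nonneg hT q CX CY
  have hα₀ := hα.1
  have hα₁ : 0 ≤ 1 - α := sub_nonneg.2 hα.2
  unfold FL
  positivity

lemma FL_glue_le {n m p d : ℕ} {α lam : ℝ} (hα : α ∈ Set.Icc (0 : ℝ) 1) (hlam : 0 ≤ lam)
    {a : Fin n → ℝ} {b : Fin m → ℝ} {c : Fin p → ℝ} (hb : ∀ j, 0 < b j)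
    {T₁ : Matrix (Fin n) (Fin m) ℝ} {T₂ : Matrix (Fin m) (Fin p) ℝ}
    (h₁ : InU a b T₁) (h₂ : InU b c T₂) {w₁ w₂ : Fin d → ℝ}
    (hw₁ : ∀ r, w₁ r ∈ Set.Icc (0 : ℝ) 1) (hw₂ : ∀ r, w₂ r ∈ Set.Icc (0 : ℝ) 1)
    (CX : Matrix (Fin n) (Fin n) ℝ) (CY : Matrix (Fin m) (Fin m) ℝ)
    (CZ : Matrix (Fin p) (Fin p) ℝ) (X : Matrix (Fin n) (Fin d) ℝ)
    (Y : Matrix (Fin m) (Fin d) ℝ) (Z : Matrix (Fin p) (Fin d) ℝ) :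
    FL 1 α lam CX CZ X Z (glue b T₁ T₂) (fun r => min (w₁ r + w₂ r) 1)
      ≤ FL 1 α lam CX CY X Y T₁ w₁ + FL 1 α lam CY CZ Y Z T₂ w₂ := by
  have hscore : ∑ r, (1 - min (w₁ r + w₂ r) 1) * score 1 X Z (glue b T₁ T₂) r
      ≤ ∑ r, (1 - w₁ r) * score 1 X Y T₁ r + ∑ r, (1 - w₂ r) * score 1 Y Z T₂ r := by
    rw [← sum_add_distrib]
    exact sum_le_sum fun r _ => one_sub_min_mul_le (hw₁ r) (hw₂ r) (score_nonneg h₁.1 1 X Y r)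
      (score_nonneg h₂.1 1 Y Z r) (score_glue_le hb h₁ h₂ X Y Z r)
  have hlasso : ∑ r, min (w₁ r + w₂ r) 1 ≤ ∑ r, w₁ r + ∑ r, w₂ r := by
    rw [← sum_add_distrib]
    exact sum_le_sum fun r _ => min_le_left _ _
  calc FL 1 α lam CX CZ X Z (glue b T₁ T₂) (fun r => min (w₁ r + w₂ r) 1)
      ≤ (1 - α) * (∑ r, (1 - w₁ r) * score 1 X Y T₁ r + ∑ r, (1 - w₂ r) * score 1 Y Z T₂ r)
        + α * (gwTerm 1 CX CY T₁ + gwTerm 1 CY CZ T₂) + lam * (∑ r, w₁ r + ∑ r, w₂ r) := by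
        unfold FL
        gcongr
        · exact sub_nonneg.2 hα.2
        · exact hα.1
        · exact gwTerm_glue_le hb h₁ h₂ CX CY CZ
    _ = FL 1 α lam CX CY X Y T₁ w₁ + FL 1 α lam CY CZ Y Z T₂ w₂ := by
        unfold FL
        ring

lemma sInf_le_sInf_add_sInf {S₁ S₂ S : Set ℝ} (h₁ : S₁.Nonempty) (h₂ : S₂.Nonempty)
    (hS : BddBelow S) (h : ∀ v₁ ∈ S₁, ∀ v₂ ∈ S₂, ∃ v ∈ S, v ≤ v₁ + v₂) :
    sInf S ≤ sInf S₁ + sInf S₂ := by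
  have hle : ∀ v₁ ∈ S₁, ∀ v₂ ∈ S₂, sInf S - v₁ ≤ v₂ := fun v₁ hv₁ v₂ hv₂ => by
    obtain ⟨v, hv, hvle⟩ := h v₁ hv₁ v₂ hv₂
    linarith [csInf_le hS hv]
  have : sInf S - sInf S₂ ≤ sInf S₁ := le_csInf h₁ fun v₁ hv₁ => by
    linarith [le_csInf h₂ (hle v₁ hv₁)]
  linarith

theorem lasso_fsFGW_triangle_general (n m p d : ℕ)
    (α lam : ℝ) (hα : α ∈ Set.Icc (0:ℝ) 1) (hlam : 0 < lam)
    (a : Fin n → ℝ) (b : Fin m → ℝ) (c : Fin p → ℝ)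
    (ha : IsProb a) (hb : IsProb b) (hc : IsProb c) (hbpos : ∀ j, 0 < b j)
    (CX : Matrix (Fin n) (Fin n) ℝ) (CY : Matrix (Fin m) (Fin m) ℝ)
    (CZ : Matrix (Fin p) (Fin p) ℝ)
    (X : Matrix (Fin n) (Fin d) ℝ) (Y : Matrix (Fin m) (Fin d) ℝ)
    (Z : Matrix (Fin p) (Fin d) ℝ) :
    fsLVal 1 α lam CX CZ X Z a c ≤
      fsLVal 1 α lam CX CY X Y a b + fsLVal 1 α lam CY CZ Y Z b c := by
  have hw₀ : ∀ r : Fin d, (0 : Fin d → ℝ) r ∈ Set.Icc (0 : ℝ) 1 := fun _ => ⟨le_rfl, zero_le_one⟩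
  refine sInf_le_sInf_add_sInf ⟨_, _, 0, InU.vecMulVec ha hb, hw₀, rfl⟩
    ⟨_, _, 0, InU.vecMulVec hb hc, hw₀, rfl⟩ ⟨0, ?_⟩ ?_
  · rintro _ ⟨T, w, hT, hw, rfl⟩
    exact FL_nonneg hα hlam.le hT.1 hw CX CZ X Z
  · rintro _ ⟨T₁, w₁, h₁, hw₁, rfl⟩ _ ⟨T₂, w₂, h₂, hw₂, rfl⟩
    refine ⟨_, ⟨glue b T₁ T₂, fun r => min (w₁ r + w₂ r) 1, h₁.glue hbpos h₂, fun r => ?_, rfl⟩,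
      FL_glue_le hα hlam.le hbpos h₁ h₂ hw₁ hw₂ CX CY CZ X Y Z⟩
    exact ⟨le_min (add_nonneg (hw₁ r).1 (hw₂ r).1) zero_le_one, min_le_right _ _⟩

/-- triangle inequality for Lasso-regularized fsFGW with `q = 1`. -/
theorem lasso_fsFGW_triangle (n m p d : ℕ)
    (hn : 1 ≤ n) (hm : 1 ≤ m) (hp : 1 ≤ p) (hd : 1 ≤ d)
    (α lam : ℝ) (hα : α ∈ Set.Icc (0:ℝ) 1) (hlam : 0 < lam)
    (a : Fin n → ℝ) (b : Fin m → ℝ) (c : Fin p → ℝ)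
    (ha : IsProb a) (hb : IsProb b) (hc : IsProb c) (hbpos : ∀ j, 0 < b j)
    (CX : Matrix (Fin n) (Fin n) ℝ) (CY : Matrix (Fin m) (Fin m) ℝ)
    (CZ : Matrix (Fin p) (Fin p) ℝ)
    (X : Matrix (Fin n) (Fin d) ℝ) (Y : Matrix (Fin m) (Fin d) ℝ)
    (Z : Matrix (Fin p) (Fin d) ℝ) :
    fsLVal 1 α lam CX CZ X Z a c ≤
      fsLVal 1 α lam CX CY X Y a b + fsLVal 1 α lam CY CZ Y Z b c :=
  lasso_fsFGW_triangle_general n m p d α lam hα hlam a b c ha hb hc hbpos CX CY CZ X Y Z
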